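/- Assume (H_c) and fix σ ≥ 0. For each ε > 0, the map s ↦ a(u,s) + εs is a strictly increasing bijection from (−ω(u),ω(u)) onto ℝ for each u ∈ [0,1]; let g^ε(u,·) be its inverse, and let V^ε be the unique function, continuous on [0,1] and C¹ on (0,1), with V^ε(1) = 0, V^ε(u) > 0 for u ∈ (0,1), and (V^ε)'(u) = σ − f(u)/g^ε(u,V^ε(u)) for u ∈ (0,1). Then for all 0 < ε₁ < ε₂ and all u ∈ [0,1]: 𝒱_σ(u) ≤ V^{ε₁}(u) ≤ V^{ε₂}(u). -/

import Mathlib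

open Set Filter Topology
open scoped ENNReal

noncomputable section

/-- The strip `Ω` between `-ω` and `ω` over `[0,1]`:
`Ω = {(u,s) : u ∈ [0,1], -ω(u) < s < ω(u)}`. -/
def OmegaSet (ω : ℝ → ℝ≥0∞) : Set (ℝ × ℝ) :=
  {p | p.1 ∈ Set.Icc (0:ℝ) 1 ∧ ENNReal.ofReal |p.2| < ω p.1}

/-- The set `𝒟` between `a₋ = -a₊` and `a₊` over `[0,1]`. -/
def DSet (aplus : ℝ → ℝ≥0∞) : Set (ℝ × ℝ) :=
  {p | p.1 ∈ Set.Icc (0:ℝ) 1 ∧ ENNReal.ofReal |p.2| < aplus p.1}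

/-- Standing data and hypotheses: a lower semicontinuous width `ω : [0,1] → (0,∞]`,
a regular flux `a` on `Ω` (odd in `s`, C¹, with `∂a/∂s > 0`), the maximal fluxes
`a₊(u) = lim_{s→ω(u)⁻} a(u,s)` (equivalently, the supremum over `0 < s < ω(u)`),
which are `+∞` whenever `ω(u) < ∞`, the partial inverse `g` on `𝒟` defined by
`a(u, g(u,v)) = v`, and a logistic-type reaction term `f`. -/
structure FluxData where
  ω : ℝ → ℝ≥0∞
  a : ℝ → ℝ → ℝ
  aplus : ℝ → ℝ≥0∞
  g : ℝ → ℝ → ℝ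
  f : ℝ → ℝ
  ω_pos : ∀ u ∈ Set.Icc (0:ℝ) 1, 0 < ω u
  ω_lsc : LowerSemicontinuousOn ω (Set.Icc (0:ℝ) 1)
  a_odd : ∀ u s, (u, s) ∈ OmegaSet ω → a u (-s) = - a u s
  a_C1 : ContDiffOn ℝ 1 (fun p : ℝ × ℝ => a p.1 p.2) (OmegaSet ω)
  a_deriv_pos : ∀ u s, (u, s) ∈ OmegaSet ω → ∃ d : ℝ, 0 < d ∧ HasDerivAt (a u) d s
  aplus_def : ∀ u ∈ Set.Icc (0:ℝ) 1,
      aplus u = ⨆ s ∈ {s : ℝ | 0 < s ∧ (u, s) ∈ OmegaSet ω}, ENNReal.ofReal (a u s)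
  aplus_pos : ∀ u ∈ Set.Icc (0:ℝ) 1, 0 < aplus u
  aplus_top : ∀ u ∈ Set.Icc (0:ℝ) 1, ω u < ⊤ → aplus u = ⊤
  g_spec : ∀ p ∈ DSet aplus, (p.1, g p.1 p.2) ∈ OmegaSet ω ∧ a p.1 (g p.1 p.2) = p.2
  f_C1 : ContDiffOn ℝ 1 f (Set.Icc (0:ℝ) 1)
  f_zero : f 0 = 0
  f_one : f 1 = 0
  f_pos : ∀ u ∈ Set.Ioo (0:ℝ) 1, 0 < f u

/-- A classic traveling wave of `u_t = (b(u,u_x))_x + f(u)` moving at speed `σ`: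
a C² increasing profile `u` with values in `(0,1)`, `0 < u' < ω(u)`, connecting
`0` at `-∞` to `1` at `+∞`, such that `ξ ↦ b(u(ξ),u'(ξ))` is differentiable and
`(b(u,u'))' - σ u' + f(u) = 0`. -/
def IsClassicTW (F : FluxData) (b : ℝ → ℝ → ℝ) (σ : ℝ) (u : ℝ → ℝ) : Prop :=
  ContDiff ℝ 2 u ∧
  (∀ ξ : ℝ, u ξ ∈ Set.Ioo (0:ℝ) 1) ∧
  (∀ ξ : ℝ, 0 < deriv u ξ ∧ ENNReal.ofReal (deriv u ξ) < F.ω (u ξ)) ∧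
  Filter.Tendsto u Filter.atBot (nhds 0) ∧
  Filter.Tendsto u Filter.atTop (nhds 1) ∧
  (∀ ξ : ℝ, HasDerivAt (fun t => b (u t) (deriv u t)) (σ * deriv u ξ - F.f (u ξ)) ξ)

/-- A right solution with speed `σ`: `V : (α,1] → ℝ`, continuous on `(α,1]`,
C¹ on `(α,1)`, `V(1) = 0`, and on `(α,1)` : `V > 0`, `(u,V(u)) ∈ 𝒟` and
`V' = σ - f(u)/g(u,V(u))`. -/
def IsRightSolution (F : FluxData) (σ α : ℝ) (V : ℝ → ℝ) : Prop :=
  α ∈ Set.Ico (0:ℝ) 1 ∧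
  ContinuousOn V (Set.Ioc α 1) ∧
  V 1 = 0 ∧
  ∀ u ∈ Set.Ioo α 1, 0 < V u ∧ (u, V u) ∈ DSet F.aplus ∧
    HasDerivAt V (σ - F.f u / F.g u (V u)) u

open Classical in
/-- `ℋ(u,V) = 1/g(u,V)` if `0 < V < a₊(u)`, and `0` if `V ≥ a₊(u)`. -/
def Hfun (F : FluxData) (u V : ℝ) : ℝ :=
  if ENNReal.ofReal V < F.aplus u then 1 / F.g u V else 0

/-- The solution `𝒱_σ` of the extended problem: continuous on `[0,1]`, C¹ on `(0,1)`,
`𝒱(1) = 0`, `𝒱 > 0` on `(0,1)` and `𝒱' = σ - f(u)·ℋ(u,𝒱(u))` on `(0,1)`. -/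
def IsVsol (F : FluxData) (σ : ℝ) (V : ℝ → ℝ) : Prop :=
  ContinuousOn V (Set.Icc (0:ℝ) 1) ∧ V 1 = 0 ∧
  (∀ u ∈ Set.Ioo (0:ℝ) 1, 0 < V u) ∧
  (∀ u ∈ Set.Ioo (0:ℝ) 1, HasDerivAt V (σ - F.f u * Hfun F u (V u)) u)

/-!
For `v > 0`, `g^ε(u, v)` is positive, nondecreasing in `v` and strictly decreasing in `ε`, and
`ℋ(u, v) < 1 / g^ε(u, v)` because `a(u, s) < a(u, s) + ε s` for `s > 0`. Consequently, for each of
the pairs `(W₁, W₂) = (𝒱_σ, V^{ε₁})` and `(V^{ε₁}, V^{ε₂})`, the slope of `W₁` strictly exceeds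
that of `W₂` wherever `W₂ ≤ W₁`. So `W₁ - W₂` increases wherever it is nonnegative; as it vanishes
at `u = 1`, it is nonpositive on `[0, 1]`.
-/

theorem IsMaxOn.hasDerivAt_nonpos {f : ℝ → ℝ} {f' a b c : ℝ} (hmax : IsMaxOn f (Icc a b) c)
    (hc : c ∈ Ico a b) (hf : HasDerivAt f f' c) : f' ≤ 0 := by
  have hcone : b - c ∈ posTangentConeAt (Icc a b) c :=
    sub_mem_posTangentConeAt_of_segment_subset <| (convex_Icc a b).segment_subset
      (Ico_subset_Icc_self hc) (right_mem_Icc.2 (hc.1.trans hc.2.le))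
  have h := hmax.localize.hasFDerivWithinAt_nonpos hf.hasFDerivAt.hasFDerivWithinAt hcone
  simp only [ContinuousLinearMap.toSpanSingleton_apply, smul_eq_mul] at h
  exact nonpos_of_mul_nonpos_right h (sub_pos.2 hc.2)

theorem nonpos_of_hasDerivAt_pos_of_nonneg {w w' : ℝ → ℝ} {a b : ℝ}
    (hw : ContinuousOn w (Icc a b)) (hb : w b ≤ 0)
    (hderiv : ∀ t ∈ Ioo a b, HasDerivAt w (w' t) t)
    (hpos : ∀ t ∈ Ioo a b, 0 ≤ w t → 0 < w' t) :
    ∀ t ∈ Icc a b, w t ≤ 0 := by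
  -- At a maximum `c` of `w` on `[t, b]` we would have `w c > 0`, so `c < b` and `w' c > 0`.
  have hIoo : ∀ t ∈ Ioo a b, w t ≤ 0 := by
    intro t ht
    by_contra! hwt
    obtain ⟨c, hc, hmax⟩ := isCompact_Icc.exists_isMaxOn (nonempty_Icc.2 ht.2.le)
      (hw.mono (Icc_subset_Icc_left ht.1.le))
    have hwc : w t ≤ w c := hmax (left_mem_Icc.2 ht.2.le)
    have hcb : c < b := hc.2.lt_of_ne (by rintro rfl; linarith)
    have hcI : c ∈ Ioo a b := ⟨ht.1.trans_le hc.1, hcb⟩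
    exact (hmax.hasDerivAt_nonpos ⟨hc.1, hcb⟩ (hderiv c hcI)).not_gt
      (hpos c hcI (by linarith))
  intro t ht
  rcases lt_or_ge a b with hab | hba
  · have htcl : t ∈ closure (Ioo a b) := by rwa [closure_Ioo hab.ne]
    exact ContinuousWithinAt.closure_le htcl ((hw t ht).mono Ioo_subset_Icc_self)
      continuousWithinAt_const hIoo
  · obtain rfl : t = b := le_antisymm ht.2 (hba.trans ht.1)
    exact hb

theorem le_of_hasDerivAt_lt_of_le {W₁ W₂ D₁ D₂ : ℝ → ℝ} {a b : ℝ}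
    (hW₁ : ContinuousOn W₁ (Icc a b)) (hW₂ : ContinuousOn W₂ (Icc a b)) (hb : W₁ b ≤ W₂ b)
    (hD₁ : ∀ t ∈ Ioo a b, HasDerivAt W₁ (D₁ t) t) (hD₂ : ∀ t ∈ Ioo a b, HasDerivAt W₂ (D₂ t) t)
    (hD : ∀ t ∈ Ioo a b, W₂ t ≤ W₁ t → D₂ t < D₁ t) :
    ∀ t ∈ Icc a b, W₁ t ≤ W₂ t := by
  have h := nonpos_of_hasDerivAt_pos_of_nonneg (w := W₁ - W₂) (w' := D₁ - D₂)
    (hW₁.sub hW₂) (sub_nonpos.2 hb) (fun t ht => (hD₁ t ht).sub (hD₂ t ht))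
    (fun t ht hwt => sub_pos.2 (hD t ht (sub_nonneg.1 hwt)))
  exact fun t ht => sub_nonpos.1 (h t ht)

theorem ordConnected_setOf_ofReal_abs_lt (r : ℝ≥0∞) :
    OrdConnected {s : ℝ | ENNReal.ofReal |s| < r} :=
  ⟨fun _ hx _ hy _ hz => (ENNReal.ofReal_le_ofReal (abs_le_max_abs_abs hz.1 hz.2)).trans_lt
    (by rw [ENNReal.ofReal_max]; exact max_lt hx hy)⟩

theorem isOpen_setOf_ofReal_abs_lt (r : ℝ≥0∞) : IsOpen {s : ℝ | ENNReal.ofReal |s| < r} :=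
  (ENNReal.continuous_ofReal.comp continuous_abs).isOpen_preimage _ isOpen_Iio

namespace FluxData

variable (F : FluxData) {u : ℝ}

theorem setOf_mem_omegaSet (hu : u ∈ Icc (0 : ℝ) 1) :
    {s : ℝ | (u, s) ∈ OmegaSet F.ω} = {s : ℝ | ENNReal.ofReal |s| < F.ω u} := by
  ext s
  exact and_iff_right hu

theorem mk_zero_mem_omegaSet (hu : u ∈ Icc (0 : ℝ) 1) : (u, (0 : ℝ)) ∈ OmegaSet F.ω :=
  ⟨hu, by simpa using F.ω_pos u hu⟩

theorem a_zero (hu : u ∈ Icc (0 : ℝ) 1) : F.a u 0 = 0 := by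
  have h := F.a_odd u 0 (F.mk_zero_mem_omegaSet hu)
  rw [neg_zero] at h
  linarith

theorem hasDerivAt_a_add_mul (ε : ℝ) {s : ℝ} (hs : (u, s) ∈ OmegaSet F.ω) :
    ∃ d, ε < d ∧ HasDerivAt (fun s => F.a u s + ε * s) d s := by
  obtain ⟨d, hd, hda⟩ := F.a_deriv_pos u s hs
  exact ⟨d + ε, by linarith, hda.add (by simpa using (hasDerivAt_id s).const_mul ε)⟩

theorem continuousOn_a_add_mul (ε : ℝ) :
    ContinuousOn (fun s => F.a u s + ε * s) {s : ℝ | (u, s) ∈ OmegaSet F.ω} := fun _ hs => by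
  obtain ⟨_, -, h⟩ := F.hasDerivAt_a_add_mul ε hs
  exact h.continuousAt.continuousWithinAt

theorem strictMonoOn_a_add_mul {ε : ℝ} (hε : 0 ≤ ε) (hu : u ∈ Icc (0 : ℝ) 1) :
    StrictMonoOn (fun s => F.a u s + ε * s) {s : ℝ | (u, s) ∈ OmegaSet F.ω} := by
  have hopen : IsOpen {s : ℝ | (u, s) ∈ OmegaSet F.ω} := by
    rw [F.setOf_mem_omegaSet hu]; exact isOpen_setOf_ofReal_abs_lt _
  have hconvex : Convex ℝ {s : ℝ | (u, s) ∈ OmegaSet F.ω} := by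
    rw [F.setOf_mem_omegaSet hu]; exact (ordConnected_setOf_ofReal_abs_lt _).convex
  refine strictMonoOn_of_deriv_pos hconvex (F.continuousOn_a_add_mul ε) fun s hs => ?_
  rw [hopen.interior_eq] at hs
  obtain ⟨d, hd, h⟩ := F.hasDerivAt_a_add_mul ε hs
  rw [h.deriv]
  linarith

theorem strictMonoOn_a (hu : u ∈ Icc (0 : ℝ) 1) :
    StrictMonoOn (F.a u) {s : ℝ | (u, s) ∈ OmegaSet F.ω} := by
  simpa using F.strictMonoOn_a_add_mul le_rfl hu

theorem exists_le_a_add_mul {ε : ℝ} (hε : 0 < ε) (hu : u ∈ Icc (0 : ℝ) 1) (v : ℝ) :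
    ∃ s, 0 < s ∧ (u, s) ∈ OmegaSet F.ω ∧ v ≤ F.a u s + ε * s := by
  rcases eq_or_ne (F.ω u) ⊤ with hω | hω
  · have hmem : ∀ s : ℝ, (u, s) ∈ OmegaSet F.ω := fun s => ⟨hu, hω ▸ ENNReal.ofReal_lt_top⟩
    set s := max 1 ((v - F.a u 1) / ε)
    have ha : F.a u 1 ≤ F.a u s :=
      (F.strictMonoOn_a hu).monotoneOn (hmem 1) (hmem s) (le_max_left _ _)
    have hs : (v - F.a u 1) / ε ≤ s := le_max_right _ _
    rw [div_le_iff₀ hε] at hs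
    exact ⟨s, one_pos.trans_le (le_max_left _ _), hmem s, by linarith⟩
  · -- `a₊(u) = ∞`, so `a(u, ·)` itself exceeds `v`.
    have hsup := F.aplus_def u hu
    rw [F.aplus_top u hu (lt_top_iff_ne_top.2 hω)] at hsup
    have hlt : ENNReal.ofReal v <
        ⨆ s ∈ {s : ℝ | 0 < s ∧ (u, s) ∈ OmegaSet F.ω}, ENNReal.ofReal (F.a u s) :=
      hsup ▸ ENNReal.ofReal_lt_top
    simp only [lt_iSup_iff] at hlt
    obtain ⟨s, ⟨hs, hsΩ⟩, hvs⟩ := hlt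
    have hva : v < F.a u s := (ENNReal.ofReal_lt_ofReal_iff'.1 hvs).1
    exact ⟨s, hs, hsΩ, by linarith [mul_pos hε hs]⟩

theorem surjOn_a_add_mul {ε : ℝ} (hε : 0 < ε) (hu : u ∈ Icc (0 : ℝ) 1) :
    SurjOn (fun s => F.a u s + ε * s) {s : ℝ | (u, s) ∈ OmegaSet F.ω} univ := by
  intro v _
  obtain ⟨s, hs, hsΩ, hvs⟩ := F.exists_le_a_add_mul hε hu |v|
  have hnegsΩ : (u, -s) ∈ OmegaSet F.ω := ⟨hu, by simpa using hsΩ.2⟩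
  have hsub : Icc (-s) s ⊆ {s : ℝ | (u, s) ∈ OmegaSet F.ω} := by
    rw [F.setOf_mem_omegaSet hu]
    exact (ordConnected_setOf_ofReal_abs_lt _).out hnegsΩ.2 hsΩ.2
  have hcont : ContinuousOn (fun t => F.a u t + ε * t) (Icc (-s) s) :=
    (F.continuousOn_a_add_mul ε).mono hsub
  -- By oddness, `-s` is sent to `-(a(u,s) + ε s) ≤ -|v|`.
  have hv : v ∈ Icc (F.a u (-s) + ε * -s) (F.a u s + ε * s) := by
    rw [F.a_odd u s hsΩ]
    constructor <;> linarith [neg_abs_le v, le_abs_self v]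
  obtain ⟨t, ht, rfl⟩ := intermediate_value_Icc (by linarith) hcont hv
  exact ⟨t, hsub ht, rfl⟩

theorem bijOn_a_add_mul {ε : ℝ} (hε : 0 < ε) (hu : u ∈ Icc (0 : ℝ) 1) :
    BijOn (fun s => F.a u s + ε * s) {s : ℝ | (u, s) ∈ OmegaSet F.ω} univ :=
  ⟨mapsTo_univ _ _, (F.strictMonoOn_a_add_mul hε.le hu).injOn, F.surjOn_a_add_mul hε hu⟩

theorem g_spec_of_pos {v : ℝ} (hu : u ∈ Icc (0 : ℝ) 1) (hv : 0 < v)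
    (hva : ENNReal.ofReal v < F.aplus u) :
    (u, F.g u v) ∈ OmegaSet F.ω ∧ F.a u (F.g u v) = v :=
  F.g_spec (u, v) ⟨hu, by rwa [abs_of_pos hv]⟩

theorem g_pos {v : ℝ} (hu : u ∈ Icc (0 : ℝ) 1) (hv : 0 < v)
    (hva : ENNReal.ofReal v < F.aplus u) : 0 < F.g u v := by
  obtain ⟨hgΩ, hga⟩ := F.g_spec_of_pos hu hv hva
  refine ((F.strictMonoOn_a hu).lt_iff_lt (F.mk_zero_mem_omegaSet hu) hgΩ).1 ?_
  rwa [hga, F.a_zero hu]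

theorem g_le_g {v v' : ℝ} (hu : u ∈ Icc (0 : ℝ) 1) (hv : 0 < v) (hvv' : v ≤ v')
    (hva : ENNReal.ofReal v' < F.aplus u) : F.g u v ≤ F.g u v' := by
  have hva' := (ENNReal.ofReal_le_ofReal hvv').trans_lt hva
  obtain ⟨hgΩ, hga⟩ := F.g_spec_of_pos hu hv hva'
  obtain ⟨hgΩ', hga'⟩ := F.g_spec_of_pos hu (hv.trans_le hvv') hva
  refine ((F.strictMonoOn_a hu).le_iff_le hgΩ hgΩ').1 ?_
  rwa [hga, hga']

theorem Hfun_le_Hfun {v v' : ℝ} (hu : u ∈ Icc (0 : ℝ) 1) (hv : 0 < v) (hvv' : v ≤ v') :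
    Hfun F u v' ≤ Hfun F u v := by
  unfold Hfun
  split_ifs with hva' hva hva
  · exact one_div_le_one_div_of_le (F.g_pos hu hv hva) (F.g_le_g hu hv hvv' hva')
  · exact absurd ((ENNReal.ofReal_le_ofReal hvv').trans_lt hva') hva
  · exact one_div_nonneg.2 (F.g_pos hu hv hva).le
  · exact le_rfl

/-- `g` is the inverse `g^ε` of `s ↦ a(u,s) + ε s` for every `u ∈ [0,1]`. -/
def IsRegularizedInverse (ε : ℝ) (g : ℝ → ℝ → ℝ) : Prop :=
  ∀ u ∈ Icc (0 : ℝ) 1, ∀ v : ℝ, (u, g u v) ∈ OmegaSet F.ω ∧ F.a u (g u v) + ε * g u v = v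

namespace IsRegularizedInverse

variable {F} {ε : ℝ} {g : ℝ → ℝ → ℝ}

theorem pos (hg : F.IsRegularizedInverse ε g) (hε : 0 ≤ ε) (hu : u ∈ Icc (0 : ℝ) 1)
    {v : ℝ} (hv : 0 < v) : 0 < g u v := by
  obtain ⟨hgΩ, hga⟩ := hg u hu v
  refine ((F.strictMonoOn_a_add_mul hε hu).lt_iff_lt (F.mk_zero_mem_omegaSet hu) hgΩ).1 ?_
  simp only [F.a_zero hu, mul_zero, add_zero, hga, hv]

theorem mono (hg : F.IsRegularizedInverse ε g) (hε : 0 ≤ ε) (hu : u ∈ Icc (0 : ℝ) 1)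
    {v v' : ℝ} (hvv' : v ≤ v') : g u v ≤ g u v' := by
  obtain ⟨hgΩ, hga⟩ := hg u hu v
  obtain ⟨hgΩ', hga'⟩ := hg u hu v'
  refine ((F.strictMonoOn_a_add_mul hε hu).le_iff_le hgΩ hgΩ').1 ?_
  simp only [hga, hga', hvv']

theorem lt_of_lt {ε' : ℝ} {g' : ℝ → ℝ → ℝ} (hg : F.IsRegularizedInverse ε g)
    (hg' : F.IsRegularizedInverse ε' g') (hε : 0 ≤ ε) (hεε' : ε < ε')
    (hu : u ∈ Icc (0 : ℝ) 1) {v : ℝ} (hv : 0 < v) : g' u v < g u v := by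
  obtain ⟨hgΩ, hga⟩ := hg u hu v
  obtain ⟨hgΩ', hga'⟩ := hg' u hu v
  have hpos := hg'.pos (hε.trans hεε'.le) hu hv
  refine ((F.strictMonoOn_a_add_mul hε hu).lt_iff_lt hgΩ' hgΩ).1 ?_
  rw [hga]
  linarith [mul_lt_mul_of_pos_right hεε' hpos]

theorem lt_g (hg : F.IsRegularizedInverse ε g) (hε : 0 < ε) (hu : u ∈ Icc (0 : ℝ) 1)
    {v : ℝ} (hv : 0 < v) (hva : ENNReal.ofReal v < F.aplus u) : g u v < F.g u v := by
  obtain ⟨hgΩ, hga⟩ := hg u hu v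
  obtain ⟨hFgΩ, hFga⟩ := F.g_spec_of_pos hu hv hva
  refine ((F.strictMonoOn_a hu).lt_iff_lt hgΩ hFgΩ).1 ?_
  rw [hFga]
  linarith [mul_pos hε (hg.pos hε.le hu hv)]

theorem Hfun_lt (hg : F.IsRegularizedInverse ε g) (hε : 0 < ε) (hu : u ∈ Icc (0 : ℝ) 1)
    {v : ℝ} (hv : 0 < v) : Hfun F u v < 1 / g u v := by
  have hpos := hg.pos hε.le hu hv
  unfold Hfun
  split_ifs with hva
  · exact one_div_lt_one_div_of_lt hpos (hg.lt_g hε hu hv hva)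
  · positivity

end IsRegularizedInverse

end FluxData

theorem stmt9_general (F : FluxData)
    (σ : ℝ) (𝒱σ : ℝ → ℝ) (h𝒱σ : IsVsol F σ 𝒱σ)
    (ε₁ ε₂ : ℝ) (hε₁ : 0 < ε₁) (hε₁₂ : ε₁ < ε₂)
    (g1 g2 : ℝ → ℝ → ℝ)
    (hg1 : ∀ u ∈ Set.Icc (0:ℝ) 1, ∀ v : ℝ,
      (u, g1 u v) ∈ OmegaSet F.ω ∧ F.a u (g1 u v) + ε₁ * g1 u v = v)
    (hg2 : ∀ u ∈ Set.Icc (0:ℝ) 1, ∀ v : ℝ,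
      (u, g2 u v) ∈ OmegaSet F.ω ∧ F.a u (g2 u v) + ε₂ * g2 u v = v)
    (V1 V2 : ℝ → ℝ)
    (hV1 : ContinuousOn V1 (Set.Icc (0:ℝ) 1) ∧ V1 1 = 0 ∧
      (∀ u ∈ Set.Ioo (0:ℝ) 1, 0 < V1 u) ∧
      (∀ u ∈ Set.Ioo (0:ℝ) 1, HasDerivAt V1 (σ - F.f u / g1 u (V1 u)) u))
    (hV2 : ContinuousOn V2 (Set.Icc (0:ℝ) 1) ∧ V2 1 = 0 ∧
      (∀ u ∈ Set.Ioo (0:ℝ) 1, 0 < V2 u) ∧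
      (∀ u ∈ Set.Ioo (0:ℝ) 1, HasDerivAt V2 (σ - F.f u / g2 u (V2 u)) u)) :
    (∀ ε : ℝ, 0 < ε → ∀ u ∈ Set.Icc (0:ℝ) 1,
      StrictMonoOn (fun s => F.a u s + ε * s) {s : ℝ | (u, s) ∈ OmegaSet F.ω} ∧
      Set.BijOn (fun s => F.a u s + ε * s) {s : ℝ | (u, s) ∈ OmegaSet F.ω} Set.univ) ∧
    (∀ u ∈ Set.Icc (0:ℝ) 1, 𝒱σ u ≤ V1 u ∧ V1 u ≤ V2 u) := by
  obtain ⟨h𝒱c, h𝒱1, -, h𝒱d⟩ := h𝒱σ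
  obtain ⟨hV1c, hV11, hV1pos, hV1d⟩ := hV1
  obtain ⟨hV2c, hV21, hV2pos, hV2d⟩ := hV2
  have hg1 : F.IsRegularizedInverse ε₁ g1 := hg1
  have hg2 : F.IsRegularizedInverse ε₂ g2 := hg2
  refine ⟨fun ε hε u hu => ⟨F.strictMonoOn_a_add_mul hε.le hu, F.bijOn_a_add_mul hε hu⟩,
    fun u hu => ⟨?_, ?_⟩⟩
  · refine le_of_hasDerivAt_lt_of_le h𝒱c hV1c (by rw [h𝒱1, hV11]) h𝒱d hV1d
      (fun t ht hV1𝒱 => ?_) u hu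
    have htI := Ioo_subset_Icc_self ht
    have hf := F.f_pos t ht
    calc σ - F.f t / g1 t (V1 t) = σ - F.f t * (1 / g1 t (V1 t)) := by rw [mul_one_div]
      _ < σ - F.f t * Hfun F t (V1 t) := by
        gcongr; exact hg1.Hfun_lt hε₁ htI (hV1pos t ht)
      _ ≤ σ - F.f t * Hfun F t (𝒱σ t) := by
        gcongr; exact F.Hfun_le_Hfun htI (hV1pos t ht) hV1𝒱
  · refine le_of_hasDerivAt_lt_of_le hV1c hV2c (by rw [hV11, hV21]) hV1d hV2d
      (fun t ht hV2V1 => ?_) u hu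
    have htI := Ioo_subset_Icc_self ht
    have hf := F.f_pos t ht
    have hg2pos := hg2.pos (hε₁.trans hε₁₂).le htI (hV2pos t ht)
    have hg1pos := hg1.pos hε₁.le htI (hV2pos t ht)
    calc σ - F.f t / g2 t (V2 t) < σ - F.f t / g1 t (V2 t) := by
          gcongr; exact hg1.lt_of_lt hg2 hε₁.le hε₁₂ htI (hV2pos t ht)
      _ ≤ σ - F.f t / g1 t (V1 t) := by
          gcongr; exact hg1.mono hε₁.le htI hV2V1

theorem stmt9 (F : FluxData) (hc : ContinuousOn F.aplus (Set.Icc (0:ℝ) 1))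
    (σ : ℝ) (hσ : 0 ≤ σ) (𝒱σ : ℝ → ℝ) (h𝒱σ : IsVsol F σ 𝒱σ)
    (ε₁ ε₂ : ℝ) (hε₁ : 0 < ε₁) (hε₁₂ : ε₁ < ε₂)
    (g1 g2 : ℝ → ℝ → ℝ)
    (hg1 : ∀ u ∈ Set.Icc (0:ℝ) 1, ∀ v : ℝ,
      (u, g1 u v) ∈ OmegaSet F.ω ∧ F.a u (g1 u v) + ε₁ * g1 u v = v)
    (hg2 : ∀ u ∈ Set.Icc (0:ℝ) 1, ∀ v : ℝ,
      (u, g2 u v) ∈ OmegaSet F.ω ∧ F.a u (g2 u v) + ε₂ * g2 u v = v)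
    (V1 V2 : ℝ → ℝ)
    (hV1 : ContinuousOn V1 (Set.Icc (0:ℝ) 1) ∧ V1 1 = 0 ∧
      (∀ u ∈ Set.Ioo (0:ℝ) 1, 0 < V1 u) ∧
      (∀ u ∈ Set.Ioo (0:ℝ) 1, HasDerivAt V1 (σ - F.f u / g1 u (V1 u)) u))
    (hV2 : ContinuousOn V2 (Set.Icc (0:ℝ) 1) ∧ V2 1 = 0 ∧
      (∀ u ∈ Set.Ioo (0:ℝ) 1, 0 < V2 u) ∧
      (∀ u ∈ Set.Ioo (0:ℝ) 1, HasDerivAt V2 (σ - F.f u / g2 u (V2 u)) u)) :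
    (∀ ε : ℝ, 0 < ε → ∀ u ∈ Set.Icc (0:ℝ) 1,
      StrictMonoOn (fun s => F.a u s + ε * s) {s : ℝ | (u, s) ∈ OmegaSet F.ω} ∧
      Set.BijOn (fun s => F.a u s + ε * s) {s : ℝ | (u, s) ∈ OmegaSet F.ω} Set.univ) ∧
    (∀ u ∈ Set.Icc (0:ℝ) 1, 𝒱σ u ≤ V1 u ∧ V1 u ≤ V2 u) :=
  stmt9_general F σ 𝒱σ h𝒱σ ε₁ ε₂ hε₁ hε₁₂ g1 g2 hg1 hg2 V1 V2 hV1 hV2
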